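/- arXiv:1603.03461 — 4 statements merged into one kernel-verified Lean document; each statement's English description precedes it below -/
import Mathlib

section
/- Let v > 0 be the right Perron eigenvector (Pv = v, ∑_i v_i = 1) of P = (1/2)(I + D^{-1}A) for a strongly connected directed graph with diameter Δ and maximum out-degree d*. Then max_i v_i ≤ (1/n)(d*)^Δ and min_i v_i ≥ (1/n)(1/d*)^Δ. -/
open Finset Matrix

/-- Out-degree of vertex `i` in the directed graph with edge relation `E`. -/
def outDeg {n : ℕ} (E : Fin n → Fin n → Prop) [DecidableRel E] (i : Fin n) : ℕ :=
  (Finset.univ.filter (fun j => E i j)).card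

/-- The adjacency matrix: `A i j = 1` iff there is an edge `(j, i) ∈ E`. -/
def adjMat {n : ℕ} (E : Fin n → Fin n → Prop) [DecidableRel E] :
    Matrix (Fin n) (Fin n) ℝ :=
  fun i j => if E j i then 1 else 0

/-- The matrix `P = (1/2)(I + D⁻¹ A)`. -/
noncomputable def Pmat {n : ℕ} (E : Fin n → Fin n → Prop) [DecidableRel E] :
    Matrix (Fin n) (Fin n) ℝ :=
  fun i j => (1 / 2) * ((if i = j then (1 : ℝ) else 0) + adjMat E i j / (outDeg E i : ℝ))

/-- `pathOfLen E k i j` : there is a directed path of length exactly `k` from `i` to `j`. -/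
def pathOfLen {n : ℕ} (E : Fin n → Fin n → Prop) : ℕ → Fin n → Fin n → Prop
  | 0, i, j => i = j
  | (k + 1), i, j => ∃ m, E i m ∧ pathOfLen E k m j

/-- Bounds on the Perron eigenvector of `P = (1/2)(I + D⁻¹A)` for a strongly connected
directed graph: if `Δ` bounds the diameter (every ordered pair of vertices is joined by
a directed path of length at most `Δ`) and `d*` is the maximum out-degree, then the
positive right eigenvector `v` with `Pv = v` and `∑ v_i = 1` satisfies
`v_i ≤ (1/n)(d*)^Δ` and `v_i ≥ (1/n)(1/d*)^Δ` for every `i`. -/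
theorem perron_vector_bounds {n : ℕ} (hn : 0 < n)
    (E : Fin n → Fin n → Prop) [DecidableRel E]
    (hdeg : ∀ i, 0 < outDeg E i)
    (Δ : ℕ) (hΔ : ∀ i j : Fin n, ∃ k ≤ Δ, pathOfLen E k i j)
    (dstar : ℕ) (hdstar : dstar = Finset.univ.sup (fun i => outDeg E i))
    (v : Fin n → ℝ) (hvpos : ∀ i, 0 < v i)
    (hev : (Pmat E).mulVec v = v) (hsum : ∑ i, v i = 1) :
    (∀ i, v i ≤ (1 / n : ℝ) * (dstar : ℝ) ^ Δ) ∧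
    (∀ i, (1 / n : ℝ) * (1 / (dstar : ℝ)) ^ Δ ≤ v i) := by
  have hnpos : (0:ℝ) < n := by exact_mod_cast hn
  have hS : ∀ i, ∑ j ∈ Finset.univ.filter (fun j => E j i), v j = (outDeg E i : ℝ) * v i := by
    intro i
    have h := congrFun hev i
    have hd : (0:ℝ) < (outDeg E i : ℝ) := by exact_mod_cast hdeg i
    simp only [Matrix.mulVec, dotProduct, Pmat, adjMat, mul_add, add_mul, mul_comm,
      Finset.sum_add_distrib] at h
    simp only [mul_ite, ite_mul, mul_one, mul_zero, one_mul, zero_mul, zero_div,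
      Finset.sum_ite_eq, Finset.mem_univ, if_true] at h
    have hrw : ∀ x, v x * ((if E x i then (1:ℝ) else 0) / ↑(outDeg E i) * (1/2))
        = (if E x i then v x else 0) * ((outDeg E i : ℝ) * 2)⁻¹ := by
      intro x; split <;> ring
    rw [Finset.sum_congr rfl (fun x _ => hrw x), ← Finset.sum_mul, ← Finset.sum_filter] at h
    have hd' : ((outDeg E i : ℝ)) ≠ 0 := ne_of_gt hd
    field_simp at h
    linarith
  have hdstar1 : 1 ≤ dstar := by
    have h1 := hdeg ⟨0, hn⟩
    have h2 : outDeg E ⟨0, hn⟩ ≤ Finset.univ.sup (fun i => outDeg E i) :=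
      Finset.le_sup (Finset.mem_univ _)
    omega
  have hdstar1' : (1:ℝ) ≤ (dstar : ℝ) := by exact_mod_cast hdstar1
  have hdpos : (0:ℝ) < (dstar : ℝ) := lt_of_lt_of_le one_pos hdstar1'
  have hkey : ∀ i k, E k i → v k ≤ (dstar : ℝ) * v i := by
    intro i k hk
    have h1 : v k ≤ ∑ j ∈ Finset.univ.filter (fun j => E j i), v j :=
      Finset.single_le_sum (fun j _ => (hvpos j).le) (by simp [hk])
    have h2 : ((outDeg E i : ℝ)) ≤ (dstar : ℝ) := by
      have : outDeg E i ≤ dstar := hdstar ▸ Finset.le_sup (Finset.mem_univ i)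
      exact_mod_cast this
    calc v k ≤ ∑ j ∈ Finset.univ.filter (fun j => E j i), v j := h1
      _ = (outDeg E i : ℝ) * v i := hS i
      _ ≤ (dstar : ℝ) * v i := mul_le_mul_of_nonneg_right h2 (hvpos i).le
  have hpath : ∀ k i j, pathOfLen E k i j → v i ≤ (dstar : ℝ) ^ k * v j := by
    intro k
    induction k with
    | zero =>
      intro i j hij
      have : i = j := hij
      subst this; simp
    | succ k ih =>
      intro i j hij
      obtain ⟨m, him, hm⟩ := hij
      calc v i ≤ (dstar : ℝ) * v m := hkey m i him
        _ ≤ (dstar : ℝ) * ((dstar : ℝ) ^ k * v j) :=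
            mul_le_mul_of_nonneg_left (ih m j hm) hdpos.le
        _ = (dstar : ℝ) ^ (k + 1) * v j := by ring
  have hub : ∀ i j, v i ≤ (dstar : ℝ) ^ Δ * v j := by
    intro i j
    obtain ⟨k, hk, hp⟩ := hΔ i j
    calc v i ≤ (dstar : ℝ) ^ k * v j := hpath k i j hp
      _ ≤ (dstar : ℝ) ^ Δ * v j :=
          mul_le_mul_of_nonneg_right (pow_le_pow_right₀ hdstar1' hk) (hvpos j).le
  constructor
  · intro i
    have hsum' : (n : ℝ) * v i ≤ (dstar : ℝ) ^ Δ := by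
      calc (n : ℝ) * v i = ∑ _j : Fin n, v i := by
            simp [Finset.sum_const, Finset.card_univ, mul_comm]
        _ ≤ ∑ j : Fin n, (dstar : ℝ) ^ Δ * v j :=
            Finset.sum_le_sum (fun j _ => hub i j)
        _ = (dstar : ℝ) ^ Δ * ∑ j, v j := by rw [Finset.mul_sum]
        _ = (dstar : ℝ) ^ Δ := by rw [hsum, mul_one]
    rw [one_div_mul_eq_div, le_div_iff₀ hnpos]
    linarith [mul_comm (v i) (n : ℝ)]
  · intro i
    have hsum' : (1 : ℝ) ≤ (n : ℝ) * ((dstar : ℝ) ^ Δ * v i) := by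
      calc (1 : ℝ) = ∑ j, v j := hsum.symm
        _ ≤ ∑ _j : Fin n, (dstar : ℝ) ^ Δ * v i :=
            Finset.sum_le_sum (fun j _ => hub j i)
        _ = (n : ℝ) * ((dstar : ℝ) ^ Δ * v i) := by
            simp [Finset.sum_const, Finset.card_univ]
    have hC : (0:ℝ) < (n : ℝ) * (dstar : ℝ) ^ Δ := by positivity
    have heq : (1 / n : ℝ) * (1 / (dstar : ℝ)) ^ Δ = 1 / ((n : ℝ) * (dstar : ℝ) ^ Δ) := by
      rw [div_pow, one_pow]
      field_simp
    rw [heq, div_le_iff₀ hC]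
    nlinarith
end

section
/- Let λ ∈ (0,1). There exists a constant C' = 4/(1−λ) such that for all T ≥ 2, the double sum ∑_{t=0}^{T} ∑_{s=0}^{t−1} λ^{t−s−1} (1/√(s+1)) (1/√(t+1)) ≤ C' log T. -/
open Finset

/-- Let `λ ∈ (0,1)`. With `C' = 4/(1−λ)`, for all `T ≥ 2` the double sum
`∑_{t=0}^{T} ∑_{s=0}^{t−1} λ^{t−s−1} (1/√(s+1)) (1/√(t+1))` is at most `C' log T`. -/
theorem double_sum_le_log {l : ℝ} (hl0 : 0 < l) (hl1 : l < 1) (T : ℕ) (hT : 2 ≤ T) :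
    ∑ t ∈ Finset.range (T + 1), ∑ s ∈ Finset.range t,
        l ^ (t - s - 1) * (1 / Real.sqrt (s + 1)) * (1 / Real.sqrt (t + 1)) ≤
      (4 / (1 - l)) * Real.log T := by
  have h1l : (0:ℝ) < 1 - l := by linarith
  have hlogT : (1:ℝ)/2 ≤ Real.log T := by
    have h2 : (2:ℝ) ≤ T := by exact_mod_cast hT
    have := Real.log_le_log (by norm_num) h2
    have h2' : (0.6931471803 : ℝ) < Real.log 2 := Real.log_two_gt_d9
    linarith
  -- swap the order of summation
  have hswap : (∑ t ∈ Finset.range (T + 1), ∑ s ∈ Finset.range t,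
        l ^ (t - s - 1) * (1 / Real.sqrt (s + 1)) * (1 / Real.sqrt (t + 1)))
      = ∑ s ∈ Finset.range (T + 1), ∑ t ∈ Finset.Ico (s+1) (T+1),
        l ^ (t - s - 1) * (1 / Real.sqrt (s + 1)) * (1 / Real.sqrt (t + 1)) := by
    apply Finset.sum_comm'
    intro x y
    simp only [Finset.mem_range, Finset.mem_Ico]
    omega
  rw [hswap]
  -- bound the inner sums
  have hinner : ∀ s ∈ Finset.range (T+1),
      (∑ t ∈ Finset.Ico (s+1) (T+1),
        l ^ (t - s - 1) * (1 / Real.sqrt (s + 1)) * (1 / Real.sqrt (t + 1)))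
      ≤ (1/(1-l)) * (1/(s+1:ℝ)) := by
    intro s _
    have hs1 : (0:ℝ) < s + 1 := by positivity
    have step1 : (∑ t ∈ Finset.Ico (s+1) (T+1),
        l ^ (t - s - 1) * (1 / Real.sqrt (s + 1)) * (1 / Real.sqrt (t + 1)))
        ≤ ∑ t ∈ Finset.Ico (s+1) (T+1), l ^ (t - s - 1) * (1/(s+1:ℝ)) := by
      apply Finset.sum_le_sum
      intro t ht
      have hts : s + 1 ≤ t := (Finset.mem_Ico.mp ht).1
      have hsqrt : (1 / Real.sqrt (s + 1)) * (1 / Real.sqrt (t + 1)) ≤ 1/(s+1:ℝ) := by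
        have h1 : Real.sqrt (s+1) ≤ Real.sqrt (t+1) := by
          apply Real.sqrt_le_sqrt
          have hst : s ≤ t := by omega
          have : (s:ℝ) ≤ t := by exact_mod_cast hst
          linarith
        have h2 : (0:ℝ) < Real.sqrt (s+1) := Real.sqrt_pos.mpr hs1
        have h3 : 1 / Real.sqrt (t+1) ≤ 1 / Real.sqrt (s+1) := by
          apply one_div_le_one_div_of_le h2 h1
        calc (1 / Real.sqrt (s + 1)) * (1 / Real.sqrt (t + 1))
            ≤ (1 / Real.sqrt (s + 1)) * (1 / Real.sqrt (s + 1)) := by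
              apply mul_le_mul_of_nonneg_left h3 (by positivity)
          _ = 1/(s+1:ℝ) := by
              rw [div_mul_div_comm, one_mul, Real.mul_self_sqrt hs1.le]
      have hpow : (0:ℝ) ≤ l ^ (t - s - 1) := by positivity
      calc l ^ (t - s - 1) * (1 / Real.sqrt (s + 1)) * (1 / Real.sqrt (t + 1))
          = l ^ (t - s - 1) * ((1 / Real.sqrt (s + 1)) * (1 / Real.sqrt (t + 1))) := by ring
        _ ≤ l ^ (t - s - 1) * (1/(s+1:ℝ)) := mul_le_mul_of_nonneg_left hsqrt hpow
    have step2 : (∑ t ∈ Finset.Ico (s+1) (T+1), l ^ (t - s - 1) * (1/(s+1:ℝ)))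
        ≤ (1/(1-l)) * (1/(s+1:ℝ)) := by
      rw [← Finset.sum_mul]
      apply mul_le_mul_of_nonneg_right _ (by positivity)
      have hgeo : (∑ t ∈ Finset.Ico (s+1) (T+1), l ^ (t - s - 1))
          = ∑ i ∈ Finset.range (T + 1 - (s+1)), l ^ i := by
        rw [Finset.sum_Ico_eq_sum_range]
        apply Finset.sum_congr rfl
        intro i _
        congr 1
        omega
      rw [hgeo, geom_sum_eq hl1.ne]
      have heq : (l ^ (T + 1 - (s+1)) - 1) / (l - 1)
          = (1 - l ^ (T + 1 - (s+1))) / (1 - l) := by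
        rw [← neg_div_neg_eq]; ring_nf
      rw [heq, div_le_div_iff₀ h1l h1l]
      have : (0:ℝ) ≤ l ^ (T + 1 - (s+1)) := by positivity
      nlinarith
    exact step1.trans step2
  calc (∑ s ∈ Finset.range (T + 1), ∑ t ∈ Finset.Ico (s+1) (T+1),
        l ^ (t - s - 1) * (1 / Real.sqrt (s + 1)) * (1 / Real.sqrt (t + 1)))
      ≤ ∑ s ∈ Finset.range (T+1), (1/(1-l)) * (1/(s+1:ℝ)) :=
        Finset.sum_le_sum hinner
    _ = (1/(1-l)) * ∑ s ∈ Finset.range (T+1), (1/(s+1:ℝ)) := by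
        rw [Finset.mul_sum]
    _ ≤ (1/(1-l)) * (1 + Real.log (T+1)) := by
        apply mul_le_mul_of_nonneg_left _ (by positivity)
        have := harmonic_le_one_add_log (T+1)
        have hh : ((harmonic (T+1) : ℚ) : ℝ) = ∑ s ∈ Finset.range (T+1), (1/(s+1:ℝ)) := by
          rw [harmonic]
          push_cast
          simp [one_div]
        rw [← hh]
        push_cast at this ⊢
        linarith
    _ ≤ (4/(1-l)) * Real.log T := by
        have hT' : (2:ℝ) ≤ T := by exact_mod_cast hT
        have hlog2 : Real.log (T+1) ≤ 2 * Real.log T := by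
          calc Real.log ((T:ℝ)+1) ≤ Real.log ((T:ℝ)^2) := by
                apply Real.log_le_log (by positivity)
                nlinarith
            _ = 2 * Real.log T := by
                rw [Real.log_pow]; norm_num
        rw [div_mul_eq_mul_div, div_mul_eq_mul_div, div_le_div_iff₀ h1l h1l]
        nlinarith
end

section
/- Suppose |[Φ(t:s)]_{ij} − 1/n| ≤ C λ^{t−s+1} for constants C > 0, λ ∈ (0,1), and suppose subgradients are uniformly bounded by L. Define x(t+1) = Φ(t:0)x(0) − ∑_{s=0}^{t} α(s) Φ(t:s+1) g(s) and y(t) = (1/n)∑_i x_i(0) − (1/n)∑_{s=0}^{t−1} α(s) ∑_i g_i(s), where |g_i(s)| ≤ L and α(s) ≥ 0. Then |x_i(t) − y(t)| ≤ C λ^t ‖x(0)‖_1 + nLC ∑_{s=0}^{t−1} λ^{t−s−1} α(s) for all i and t. -/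
open Finset

/-!
A matrix within `ε` entrywise of the averaging matrix `(1/n) 𝟙 𝟙ᵀ` moves each coordinate of `M v`
at most `ε ‖v‖₁` away from the mean of `v`. By the recursion, `x(t) − y(t)` is such a deviation for
`Φ(t−1:0) x(0)` minus `α(s)`-weighted deviations for `Φ(t−1:s+1) g(s)`, and the triangle inequality
finishes.
-/

theorem mulVec_sub_mean_eq_sum {m ι : Type*} [Fintype ι] (M : Matrix m ι ℝ) (v : ι → ℝ) (i : m) :
    M.mulVec v i - 1 / Fintype.card ι * ∑ j, v j =
      ∑ j, (M i j - 1 / Fintype.card ι) * v j := by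
  simp only [Matrix.mulVec, dotProduct, sub_mul, sum_sub_distrib, mul_sum]

theorem abs_mulVec_sub_mean_le {m ι : Type*} [Fintype ι] (M : Matrix m ι ℝ) (v : ι → ℝ)
    (i : m) {ε : ℝ} (hM : ∀ j, |M i j - 1 / Fintype.card ι| ≤ ε) :
    |M.mulVec v i - 1 / Fintype.card ι * ∑ j, v j| ≤ ε * ∑ j, |v j| := by
  rw [mulVec_sub_mean_eq_sum, mul_sum]
  refine (abs_sum_le_sum_abs _ _).trans (sum_le_sum fun j _ => ?_)
  rw [abs_mul]
  exact mul_le_mul_of_nonneg_right (hM j) (abs_nonneg _)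

theorem abs_mulVec_sub_mean_le_of_abs_le {m ι : Type*} [Fintype ι] (M : Matrix m ι ℝ)
    (v : ι → ℝ) (i : m) {ε L : ℝ} (hM : ∀ j, |M i j - 1 / Fintype.card ι| ≤ ε) (hε : 0 ≤ ε)
    (hv : ∀ j, |v j| ≤ L) :
    |M.mulVec v i - 1 / Fintype.card ι * ∑ j, v j| ≤ ε * (Fintype.card ι * L) := by
  refine (abs_mulVec_sub_mean_le M v i hM).trans (mul_le_mul_of_nonneg_left ?_ hε)
  simpa using sum_le_card_nsmul univ _ L fun j _ => hv j

theorem estimate_consensus_error_bound_general {n : ℕ}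
    (Φ : ℕ → ℕ → Matrix (Fin n) (Fin n) ℝ) {C l L : ℝ}
    (hΦ : ∀ t s : ℕ, s ≤ t + 1 → ∀ i j, |Φ t s i j - 1 / n| ≤ C * l ^ (t + 1 - s))
    (hΦI : ∀ t : ℕ, Φ t (t + 1) = 1)
    (α : ℕ → ℝ) (hα : ∀ s, 0 ≤ α s)
    (g : ℕ → Fin n → ℝ) (hg : ∀ s i, |g s i| ≤ L)
    (x : ℕ → Fin n → ℝ)
    (hx : ∀ t : ℕ, x (t + 1) =
      (Φ t 0).mulVec (x 0) - ∑ s ∈ Finset.range (t + 1), α s • ((Φ t (s + 1)).mulVec (g s)))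
    (y : ℕ → ℝ)
    (hy : ∀ t : ℕ, y t =
      (1 / n : ℝ) * ∑ i, x 0 i - (1 / n : ℝ) * ∑ s ∈ Finset.range t, α s * ∑ i, g s i) :
    ∀ t : ℕ, ∀ i, |x t i - y t| ≤
      C * l ^ t * (∑ j, |x 0 j|) +
        n * L * C * ∑ s ∈ Finset.range t, l ^ (t - s - 1) * α s := by
  intro t i
  have hΦ' : ∀ t s, s ≤ t + 1 → ∀ j, |Φ t s i j - 1 / Fintype.card (Fin n)| ≤ C * l ^ (t + 1 - s) :=
    fun t s hs => by simpa only [Fintype.card_fin] using hΦ t s hs i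
  have hdev : ∀ t s (v : Fin n → ℝ), s ≤ t + 1 →
      |(Φ t s).mulVec v i - 1 / n * ∑ j, v j| ≤ C * l ^ (t + 1 - s) * ∑ j, |v j| :=
    fun t s v hs => by
      simpa only [Fintype.card_fin] using abs_mulVec_sub_mean_le (Φ t s) v i (hΦ' t s hs)
  cases t with
  | zero => simpa [hy 0, hΦI 0] using hdev 0 1 (x 0) le_rfl
  | succ t =>
    have hsplit : x (t + 1) i - y (t + 1) =
        ((Φ t 0).mulVec (x 0) i - 1 / n * ∑ j, x 0 j) -
          ∑ s ∈ range (t + 1), α s * ((Φ t (s + 1)).mulVec (g s) i - 1 / n * ∑ j, g s j) := by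
      rw [hx t, hy (t + 1)]
      simp only [Pi.sub_apply, Finset.sum_apply, Pi.smul_apply, smul_eq_mul, mul_sub,
        sum_sub_distrib, mul_sum, mul_left_comm]
      abel
    have hstep : ∀ s ∈ range (t + 1),
        |α s * ((Φ t (s + 1)).mulVec (g s) i - 1 / n * ∑ j, g s j)| ≤
          n * L * C * (l ^ (t + 1 - s - 1) * α s) := fun s hs => by
      have hst : s + 1 ≤ t + 1 := mem_range.mp hs
      have hgs := abs_mulVec_sub_mean_le_of_abs_le (Φ t (s + 1)) (g s) i (hΦ' t (s + 1) hst)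
        ((abs_nonneg _).trans (hΦ t (s + 1) hst i i)) (hg s)
      rw [Fintype.card_fin, show t + 1 - (s + 1) = t + 1 - s - 1 by omega] at hgs
      rw [abs_mul, abs_of_nonneg (hα s)]
      calc _ ≤ α s * (C * l ^ (t + 1 - s - 1) * (n * L)) := mul_le_mul_of_nonneg_left hgs (hα s)
        _ = _ := by ring
    rw [hsplit, mul_sum (range _)]
    exact (abs_sub _ _).trans <| add_le_add (hdev t 0 (x 0) (Nat.zero_le _))
      ((abs_sum_le_sum_abs _ _).trans (sum_le_sum hstep))

/-- Consensus error bound: suppose the transition matrices satisfy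
`|[Φ(t:s)]_{ij} − 1/n| ≤ C λ^{t−s+1}` (with the convention `Φ(t:t+1) = I`), the
subgradients are bounded by `L`, and
`x(t+1) = Φ(t:0) x(0) − ∑_{s=0}^{t} α(s) Φ(t:s+1) g(s)`,
`y(t) = (1/n) ∑_i x_i(0) − (1/n) ∑_{s=0}^{t−1} α(s) ∑_i g_i(s)`.
Then `|x_i(t) − y(t)| ≤ C λ^t ‖x(0)‖₁ + n L C ∑_{s=0}^{t−1} λ^{t−s−1} α(s)`. -/
theorem estimate_consensus_error_bound {n : ℕ} (hn : 0 < n)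
    (Φ : ℕ → ℕ → Matrix (Fin n) (Fin n) ℝ) {C l L : ℝ}
    (hC : 0 < C) (hl0 : 0 < l) (hl1 : l < 1) (hL : 0 ≤ L)
    (hΦ : ∀ t s : ℕ, s ≤ t + 1 → ∀ i j, |Φ t s i j - 1 / n| ≤ C * l ^ (t + 1 - s))
    (hΦI : ∀ t : ℕ, Φ t (t + 1) = 1)
    (α : ℕ → ℝ) (hα : ∀ s, 0 ≤ α s)
    (g : ℕ → Fin n → ℝ) (hg : ∀ s i, |g s i| ≤ L)
    (x : ℕ → Fin n → ℝ)
    (hx : ∀ t : ℕ, x (t + 1) =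
      (Φ t 0).mulVec (x 0) - ∑ s ∈ Finset.range (t + 1), α s • ((Φ t (s + 1)).mulVec (g s)))
    (y : ℕ → ℝ)
    (hy : ∀ t : ℕ, y t =
      (1 / n : ℝ) * ∑ i, x 0 i - (1 / n : ℝ) * ∑ s ∈ Finset.range t, α s * ∑ i, g s i) :
    ∀ t : ℕ, ∀ i, |x t i - y t| ≤
      C * l ^ t * (∑ j, |x 0 j|) +
        n * L * C * ∑ s ∈ Finset.range t, l ^ (t - s - 1) * α s :=
  estimate_consensus_error_bound_general Φ hΦ hΦI α hα g hg x hx y hy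
end

section
/- Let f_1, ..., f_n : ℝ → ℝ be convex functions with all subgradients bounded in absolute value by L. Let x* minimize F(x) = ∑_i f_i(x). Define y(t+1) = y(t) − (α(t)/n) ∑_i g_i(t) where g_i(t) ∈ ∂f_i(x_i(t)) for arbitrary points x_i(t), and let ŷ(T) = (∑_{t=0}^T α(t))^{-1} ∑_{t=0}^T α(t) y(t). Then ∑_i f_i(ŷ(T)) − ∑_i f_i(x*) ≤ [n(y(0)−x*)² + nL² ∑_{t=0}^T α(t)²]/(2∑_{t=0}^T α(t)) + (2L/∑_{t=0}^T α(t)) ∑_{t=0}^T α(t) ∑_i |y(t) − x_i(t)|. -/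
/-!
An element of `∂f_i(x_i(t))` is a `2L|y(t) - x_i(t)|`-subgradient of `f_i` at `y(t)`, so `y` runs
an inexact subgradient method on `F = ∑ f_i` with step `α(t)/n`. Expanding `(y(t+1) - x*)²` gives
the usual one-step estimate of `α(t) (F(y(t)) - F(x*))`, which telescopes over `t ≤ T`; Jensen's
inequality for the convex `F` then bounds `F(ŷ(T)) - F(x*)` by the `α`-weighted mean of these gaps.
-/

open Finset

/-- `g` is a subgradient of `f` at `x`. -/
def IsSubgradient (f : ℝ → ℝ) (x g : ℝ) : Prop :=
  ∀ y : ℝ, f x + g * (y - x) ≤ f y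

def IsEpsSubgradient (f : ℝ → ℝ) (ε x g : ℝ) : Prop :=
  ∀ y : ℝ, f x + g * (y - x) - ε ≤ f y

namespace ConvexOn

variable {f : ℝ → ℝ}

lemma isSubgradient_rightDeriv (hf : ConvexOn ℝ Set.univ f) (x : ℝ) :
    IsSubgradient f x (derivWithin f (Set.Ioi x) x) := by
  have hx : x ∈ interior (Set.univ : Set ℝ) := by simp
  intro y
  rcases lt_trichotomy y x with hyx | rfl | hxy
  · have h := (hf.slope_le_leftDeriv_of_mem_interior (Set.mem_univ y) hx hyx).trans
      (hf.leftDeriv_le_rightDeriv_of_mem_interior hx)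
    rw [slope_def_field, div_le_iff₀ (sub_pos.2 hyx)] at h
    linarith
  · simp
  · have h := hf.rightDeriv_le_slope_of_mem_interior hx (Set.mem_univ y) hxy
    rw [slope_def_field, le_div_iff₀ (sub_pos.2 hxy)] at h
    linarith

lemma sub_le_mul_abs_sub_of_subgradient_bound {L : ℝ} (hf : ConvexOn ℝ Set.univ f)
    (hB : ∀ x g, IsSubgradient f x g → |g| ≤ L) (x y : ℝ) :
    f y - f x ≤ L * |y - x| := by
  have hsub := hf.isSubgradient_rightDeriv y
  have hg : derivWithin f (Set.Ioi y) y * (y - x) ≤ L * |y - x| :=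
    (le_abs_self _).trans <| by
      rw [abs_mul]; exact mul_le_mul_of_nonneg_right (hB y _ hsub) (abs_nonneg _)
  linarith [hsub x]

lemma map_average_sub_le {ι : Type*} {s : Finset ι} {D : Set ℝ} {w p : ι → ℝ}
    (hf : ConvexOn ℝ D f) (hw : ∀ i ∈ s, 0 ≤ w i) (hs : 0 < ∑ i ∈ s, w i)
    (hp : ∀ i ∈ s, p i ∈ D) (z : ℝ) :
    f ((∑ i ∈ s, w i)⁻¹ * ∑ i ∈ s, w i * p i) - f z
      ≤ (∑ i ∈ s, w i)⁻¹ * ∑ i ∈ s, w i * (f (p i) - f z) := by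
  have hjensen := hf.map_centerMass_le hw hs hp
  simp only [centerMass, smul_eq_mul, Function.comp_apply] at hjensen
  simp only [mul_sub, sum_sub_distrib, ← sum_mul]
  rw [← mul_assoc, inv_mul_cancel₀ hs.ne', one_mul]
  linarith

end ConvexOn

/-- The subgradient inequality at `x` loses `L |y - x|` once through the Lipschitz bound on `f`
and once through `|g| ≤ L`. -/
lemma IsSubgradient.isEpsSubgradient {f : ℝ → ℝ} {L x g : ℝ} (hg : IsSubgradient f x g)
    (hf : ConvexOn ℝ Set.univ f) (hB : ∀ x g, IsSubgradient f x g → |g| ≤ L) (y : ℝ) :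
    IsEpsSubgradient f (2 * L * |y - x|) y g := by
  intro z
  have hfy := hf.sub_le_mul_abs_sub_of_subgradient_bound hB x y
  have hgy : g * (x - y) ≤ L * |y - x| :=
    (le_abs_self _).trans <| by
      rw [abs_mul, abs_sub_comm]; exact mul_le_mul_of_nonneg_right (hB x g hg) (abs_nonneg _)
  linarith [hg z]

lemma IsEpsSubgradient.sum {ι : Type*} (s : Finset ι) {f : ι → ℝ → ℝ} {ε g : ι → ℝ} {x : ℝ}
    (h : ∀ i ∈ s, IsEpsSubgradient (f i) (ε i) x (g i)) :
    IsEpsSubgradient (fun z => ∑ i ∈ s, f i z) (∑ i ∈ s, ε i) x (∑ i ∈ s, g i) := by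
  intro y
  simpa only [sum_add_distrib, sum_sub_distrib, sum_mul] using sum_le_sum fun i hi => h i hi y

lemma IsEpsSubgradient.mul_sub_le_of_step {F : ℝ → ℝ} {ε y G N L a : ℝ}
    (hF : IsEpsSubgradient F ε y G) (hN : 0 < N) (ha : 0 ≤ a) (hG : |G| ≤ N * L) (z : ℝ) :
    a * (F y - F z) ≤ N / 2 * ((y - z) ^ 2 - (y - a / N * G - z) ^ 2)
      + N * L ^ 2 * a ^ 2 / 2 + a * ε := by
  have hexpand : N / 2 * ((y - z) ^ 2 - (y - a / N * G - z) ^ 2)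
      = a * G * (y - z) - a ^ 2 * G ^ 2 / (2 * N) := by
    field_simp; ring
  have hG2 : a ^ 2 * G ^ 2 / (2 * N) ≤ N * L ^ 2 * a ^ 2 / 2 := by
    rw [div_le_iff₀ (by positivity)]
    have : G ^ 2 ≤ (N * L) ^ 2 := sq_le_sq' (abs_le.1 hG).1 (abs_le.1 hG).2
    nlinarith [mul_le_mul_of_nonneg_left this (sq_nonneg a)]
  nlinarith [mul_le_mul_of_nonneg_left (hF z) ha]

lemma mul_sum_sub_le_of_subgradient_step {ι : Type*} [Fintype ι] [Nonempty ι]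
    {f : ι → ℝ → ℝ} (hf : ∀ i, ConvexOn ℝ Set.univ (f i)) {L : ℝ}
    (hB : ∀ i x g, IsSubgradient (f i) x g → |g| ≤ L) {x g : ι → ℝ}
    (hg : ∀ i, IsSubgradient (f i) (x i) (g i)) {a : ℝ} (ha : 0 ≤ a) (y z : ℝ) :
    a * (∑ i, f i y - ∑ i, f i z)
      ≤ Fintype.card ι / 2 * ((y - z) ^ 2 - (y - a / Fintype.card ι * ∑ i, g i - z) ^ 2)
        + Fintype.card ι * L ^ 2 * a ^ 2 / 2 + 2 * L * (a * ∑ i, |y - x i|) := by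
  have hG : |∑ i, g i| ≤ Fintype.card ι * L := by
    simpa using (abs_sum_le_sum_abs _ univ).trans (sum_le_sum fun i _ => hB i _ _ (hg i))
  have hε := IsEpsSubgradient.sum univ fun i _ => (hg i).isEpsSubgradient (hf i) (hB i) y
  have := hε.mul_sub_le_of_step (by positivity) ha hG z
  rw [← mul_sum] at this
  linarith

lemma sum_range_le_of_le_sub_succ {u φ b : ℕ → ℝ} (h : ∀ t, φ t ≤ u t - u (t + 1) + b t)
    (T : ℕ) (hu : 0 ≤ u T) :
    ∑ t ∈ range T, φ t ≤ u 0 + ∑ t ∈ range T, b t := by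
  calc ∑ t ∈ range T, φ t ≤ ∑ t ∈ range T, (u t - u (t + 1) + b t) := sum_le_sum fun t _ => h t
    _ = u 0 - u T + ∑ t ∈ range T, b t := by rw [sum_add_distrib, sum_range_sub']
    _ ≤ u 0 + ∑ t ∈ range T, b t := by linarith

theorem ergodic_average_suboptimality_general {n : ℕ} (hn : 0 < n)
    (f : Fin n → ℝ → ℝ) (hconv : ∀ i, ConvexOn ℝ Set.univ (f i))
    {L : ℝ}
    (hbdd : ∀ i x g, IsSubgradient (f i) x g → |g| ≤ L)
    (xstar : ℝ)
    (α : ℕ → ℝ) (hα : ∀ t, 0 < α t)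
    (x : Fin n → ℕ → ℝ) (g : Fin n → ℕ → ℝ)
    (hg : ∀ i t, IsSubgradient (f i) (x i t) (g i t))
    (y : ℕ → ℝ)
    (hy : ∀ t : ℕ, y (t + 1) = y t - (α t / n) * ∑ i, g i t)
    (T : ℕ) :
    ∑ i, f i ((∑ t ∈ Finset.range (T + 1), α t)⁻¹ *
        ∑ t ∈ Finset.range (T + 1), α t * y t) - ∑ i, f i xstar ≤
      (n * (y 0 - xstar) ^ 2 + n * L ^ 2 * ∑ t ∈ Finset.range (T + 1), (α t) ^ 2) /
          (2 * ∑ t ∈ Finset.range (T + 1), α t) +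
        (2 * L / ∑ t ∈ Finset.range (T + 1), α t) *
          ∑ t ∈ Finset.range (T + 1), α t * ∑ i, |y t - x i t| := by
  set F : ℝ → ℝ := fun z => ∑ i, f i z
  have : Nonempty (Fin n) := ⟨⟨0, hn⟩⟩
  have hS : 0 < ∑ t ∈ range (T + 1), α t := sum_pos (fun t _ => hα t) nonempty_range_add_one
  have hFconv : ConvexOn ℝ Set.univ F := by
    simpa only [sum_fn] using sum_induction f (ConvexOn ℝ Set.univ) (fun _ _ => ConvexOn.add)
      (convexOn_const 0 convex_univ) fun i _ => hconv i
  have hstep : ∀ t, α t * (F (y t) - F xstar) ≤ n / 2 * (y t - xstar) ^ 2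
      - n / 2 * (y (t + 1) - xstar) ^ 2
      + (n * L ^ 2 * α t ^ 2 / 2 + 2 * L * (α t * ∑ i, |y t - x i t|)) := by
    intro t
    have := mul_sum_sub_le_of_subgradient_step hconv hbdd (fun i => hg i t) (hα t).le (y t) xstar
    rw [Fintype.card_fin] at this
    rw [hy t]
    linarith
  have htel := sum_range_le_of_le_sub_succ hstep (T + 1) (by positivity)
  calc F ((∑ t ∈ range (T + 1), α t)⁻¹ * ∑ t ∈ range (T + 1), α t * y t) - F xstar
      ≤ (∑ t ∈ range (T + 1), α t)⁻¹ * ∑ t ∈ range (T + 1), α t * (F (y t) - F xstar) :=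
        hFconv.map_average_sub_le (fun t _ => (hα t).le) hS (fun _ _ => Set.mem_univ _) xstar
    _ ≤ (∑ t ∈ range (T + 1), α t)⁻¹ * (n / 2 * (y 0 - xstar) ^ 2 + ∑ t ∈ range (T + 1),
          (n * L ^ 2 * α t ^ 2 / 2 + 2 * L * (α t * ∑ i, |y t - x i t|))) :=
        mul_le_mul_of_nonneg_left htel (inv_nonneg.2 hS.le)
    _ = _ := by
        simp only [sum_add_distrib, ← sum_div, ← mul_sum]
        field_simp
        ring

/-- Suboptimality bound for the ergodic average of the auxiliary sequence: for convex
`f_i` with subgradients bounded by `L`, minimizer `x*` of `∑_i f_i`, arbitrary points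
`x_i(t)`, subgradients `g_i(t) ∈ ∂f_i(x_i(t))`, the sequence
`y(t+1) = y(t) − (α(t)/n) ∑_i g_i(t)` and its ergodic average
`ŷ(T) = (∑_{t≤T} α(t))⁻¹ ∑_{t≤T} α(t) y(t)` satisfy
`∑_i f_i(ŷ(T)) − ∑_i f_i(x*) ≤ [n(y(0)−x*)² + nL² ∑ α(t)²]/(2 ∑ α(t))
  + (2L/∑ α(t)) ∑_t α(t) ∑_i |y(t) − x_i(t)|`. -/
theorem ergodic_average_suboptimality {n : ℕ} (hn : 0 < n)
    (f : Fin n → ℝ → ℝ) (hconv : ∀ i, ConvexOn ℝ Set.univ (f i))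
    {L : ℝ} (hL : 0 < L)
    (hbdd : ∀ i x g, IsSubgradient (f i) x g → |g| ≤ L)
    (xstar : ℝ) (hmin : ∀ x : ℝ, ∑ i, f i xstar ≤ ∑ i, f i x)
    (α : ℕ → ℝ) (hα : ∀ t, 0 < α t)
    (x : Fin n → ℕ → ℝ) (g : Fin n → ℕ → ℝ)
    (hg : ∀ i t, IsSubgradient (f i) (x i t) (g i t))
    (y : ℕ → ℝ)
    (hy : ∀ t : ℕ, y (t + 1) = y t - (α t / n) * ∑ i, g i t)
    (T : ℕ) :
    ∑ i, f i ((∑ t ∈ Finset.range (T + 1), α t)⁻¹ *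
        ∑ t ∈ Finset.range (T + 1), α t * y t) - ∑ i, f i xstar ≤
      (n * (y 0 - xstar) ^ 2 + n * L ^ 2 * ∑ t ∈ Finset.range (T + 1), (α t) ^ 2) /
          (2 * ∑ t ∈ Finset.range (T + 1), α t) +
        (2 * L / ∑ t ∈ Finset.range (T + 1), α t) *
          ∑ t ∈ Finset.range (T + 1), α t * ∑ i, |y t - x i t| :=
  ergodic_average_suboptimality_general hn f hconv hbdd xstar α hα x g hg y hy T
end
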